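/- Let G be the 3-dimensional real Heisenberg group of upper triangular unipotent 3×3 matrices, let p be a prime, and let k be a positive integer. The subgroup Γ generated by the four matrices A₁ = unipotent with (1,2)-entry 1, A₂ = unipotent with (2,3)-entry 1, A₃ = unipotent with (1,2)-entry k√p, and A₄ = unipotent with (2,3)-entry k√p is dense in G. -/

import Mathlib

noncomputable def heis (x y z : ℝ) : (Matrix (Fin 3) (Fin 3) ℝ)ˣ where
  val := !![1, x, z; 0, 1, y; 0, 0, 1]
  inv := !![1, -x, x * y - z; 0, 1, -y; 0, 0, 1]
  val_inv := by
    ext i j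
    fin_cases i <;> fin_cases j <;>
      · simp [Matrix.mul_apply, Fin.sum_univ_succ, Matrix.one_apply]; try ring
  inv_val := by
    ext i j
    fin_cases i <;> fin_cases j <;>
      · simp [Matrix.mul_apply, Fin.sum_univ_succ, Matrix.one_apply]; try ring

lemma heis_mul (x y z x' y' z' : ℝ) :
    heis x y z * heis x' y' z' = heis (x + x') (y + y') (z + z' + x * y') := by
  rw [Units.ext_iff]
  show (!![1, x, z; 0, 1, y; 0, 0, 1] * !![1, x', z'; 0, 1, y'; 0, 0, 1] : Matrix _ _ ℝ) = _
  ext i j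
  fin_cases i <;> fin_cases j <;>
    · simp [heis, Matrix.mul_apply, Fin.sum_univ_succ, Matrix.vecHead, Matrix.vecTail]; try ring

lemma heis_inv (x y z : ℝ) : (heis x y z)⁻¹ = heis (-x) (-y) (x * y - z) := by
  rw [Units.ext_iff]
  show (!![1, -x, x * y - z; 0, 1, -y; 0, 0, 1] : Matrix _ _ ℝ) = _
  ext i j
  fin_cases i <;> fin_cases j <;> simp [heis, Matrix.vecHead, Matrix.vecTail]

lemma heis_one : heis 0 0 0 = 1 := by
  rw [Units.ext_iff]
  show (!![1, (0:ℝ), 0; 0, 1, 0; 0, 0, 1] : Matrix _ _ ℝ) = 1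
  ext i j
  fin_cases i <;> fin_cases j <;> simp [Matrix.one_apply, Matrix.vecHead, Matrix.vecTail]

noncomputable def HeisGroup : Subgroup (Matrix (Fin 3) (Fin 3) ℝ)ˣ where
  carrier := Set.range fun p : ℝ × ℝ × ℝ => heis p.1 p.2.1 p.2.2
  mul_mem' := by
    rintro _ _ ⟨⟨x, y, z⟩, rfl⟩ ⟨⟨x', y', z'⟩, rfl⟩
    exact ⟨(x + x', y + y', z + z' + x * y'), (heis_mul x y z x' y' z').symm⟩
  one_mem' := ⟨(0, 0, 0), heis_one⟩
  inv_mem' := by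
    rintro _ ⟨⟨x, y, z⟩, rfl⟩
    exact ⟨(-x, -y, x * y - z), (heis_inv x y z).symm⟩

/-! The closure of `Γ` is a closed subgroup. Along each of the one-parameter subgroups
`x ↦ heis x 0 0` and `y ↦ heis 0 y 0` it contains the images of `1` and `k√p`, which generate
a dense subgroup of `ℝ` because `k√p` is irrational, so it contains both one-parameter
subgroups.
Their commutators `heis 0 0 z` fill the centre, and
`heis x y z = heis x 0 0 * heis 0 y 0 * heis 0 0 (z - x * y)`, so the closure is everything. -/

theorem MonoidHom.apply_ofAdd_mem_of_irrational_div {G : Type*} [Group G] [TopologicalSpace G]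
    {K : Subgroup G} (hK : IsClosed (K : Set G)) (f : Multiplicative ℝ →* G) (hf : Continuous f)
    {a b : ℝ} (hab : Irrational (a / b)) (ha : f (.ofAdd a) ∈ K) (hb : f (.ofAdd b) ∈ K)
    (x : ℝ) : f (.ofAdd x) ∈ K := by
  let S : AddSubgroup ℝ := (K.comap f).toAddSubgroup'
  have hS : AddSubgroup.closure {a, b} ≤ S := (AddSubgroup.closure_le S).2 (Set.pair_subset ha hb)
  have hS_closed : IsClosed (S : Set ℝ) := hK.preimage (hf.comp continuous_ofAdd)
  have hS_dense : Dense (S : Set ℝ) := (dense_addSubgroupClosure_pair_iff.2 hab).mono hS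
  exact hS_closed.closure_subset (hS_dense x)

namespace HeisGroup

noncomputable def mk (x y z : ℝ) : HeisGroup := ⟨heis x y z, ⟨(x, y, z), rfl⟩⟩

theorem exists_eq_mk (g : HeisGroup) : ∃ x y z, g = mk x y z := by
  obtain ⟨_, ⟨x, y, z⟩, rfl⟩ := g
  exact ⟨x, y, z, rfl⟩

theorem mk_mul_mk (x y z x' y' z' : ℝ) :
    mk x y z * mk x' y' z' = mk (x + x') (y + y') (z + z' + x * y') :=
  Subtype.ext (heis_mul x y z x' y' z')

theorem mk_inv (x y z : ℝ) : (mk x y z)⁻¹ = mk (-x) (-y) (x * y - z) :=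
  Subtype.ext (heis_inv x y z)

theorem continuous_mk : Continuous fun q : ℝ × ℝ × ℝ => mk q.1 q.2.1 q.2.2 := by
  refine Continuous.subtype_mk (Units.continuous_iff.2 ⟨?_, ?_⟩) _ <;>
  · refine continuous_matrix fun i j => ?_
    fin_cases i <;> fin_cases j <;> · simp [heis]; fun_prop

noncomputable def xHom : Multiplicative ℝ →* HeisGroup :=
  MonoidHom.mk' (fun x => mk x.toAdd 0 0) fun x x' => by simp [mk_mul_mk]

noncomputable def yHom : Multiplicative ℝ →* HeisGroup :=
  MonoidHom.mk' (fun y => mk 0 y.toAdd 0) fun y y' => by simp [mk_mul_mk]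

theorem continuous_xHom : Continuous xHom :=
  continuous_mk.comp (f := fun x : Multiplicative ℝ => (x.toAdd, 0, 0)) (by fun_prop)

theorem continuous_yHom : Continuous yHom :=
  continuous_mk.comp (f := fun y : Multiplicative ℝ => (0, y.toAdd, 0)) (by fun_prop)

theorem mk_zero_zero_eq_commutator (z : ℝ) :
    mk 0 0 z = mk z 0 0 * mk 0 1 0 * (mk z 0 0)⁻¹ * (mk 0 1 0)⁻¹ := by
  simp [mk_mul_mk, mk_inv]

theorem mk_eq_mul (x y z : ℝ) : mk x y z = mk x 0 0 * mk 0 y 0 * mk 0 0 (z - x * y) := by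
  simp [mk_mul_mk]

theorem eq_top_of_forall_mk_mem {K : Subgroup HeisGroup} (hx : ∀ x, mk x 0 0 ∈ K)
    (hy : ∀ y, mk 0 y 0 ∈ K) : K = ⊤ := by
  have hz : ∀ z, mk 0 0 z ∈ K := fun z => by
    rw [mk_zero_zero_eq_commutator]
    exact mul_mem (mul_mem (mul_mem (hx z) (hy 1)) (inv_mem (hx z))) (inv_mem (hy 1))
  refine eq_top_iff.2 fun g _ => ?_
  obtain ⟨x, y, z, rfl⟩ := exists_eq_mk g
  rw [mk_eq_mul]
  exact mul_mem (mul_mem (hx x) (hy y)) (hz _)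

end HeisGroup

/-- Let `G` be the 3-dimensional real Heisenberg group of upper triangular
unipotent `3×3` matrices, `p` a prime and `k` a positive integer.  The subgroup `Γ`
generated by `A₁ = heis 1 0 0`, `A₂ = heis 0 1 0`, `A₃ = heis (k√p) 0 0` and
`A₄ = heis 0 (k√p) 0` is dense in `G`. -/
theorem heisenberg_lattice_dense (p k : ℕ) (hp : p.Prime) (hk : 0 < k) :
    Dense ((Subgroup.closure
        {(⟨heis 1 0 0, ⟨(1, 0, 0), rfl⟩⟩ : HeisGroup),
         ⟨heis 0 1 0, ⟨(0, 1, 0), rfl⟩⟩,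
         ⟨heis ((k : ℝ) * Real.sqrt p) 0 0, ⟨((k : ℝ) * Real.sqrt p, 0, 0), rfl⟩⟩,
         ⟨heis 0 ((k : ℝ) * Real.sqrt p) 0, ⟨(0, (k : ℝ) * Real.sqrt p, 0), rfl⟩⟩} :
      Subgroup HeisGroup) : Set HeisGroup) := by
  set Γ : Subgroup HeisGroup := Subgroup.closure _
  have hirr : Irrational ((k : ℝ) * Real.sqrt p / 1) := by
    simpa using hp.irrational_sqrt.natCast_mul hk.ne'
  have hclosed : IsClosed (Γ.topologicalClosure : Set HeisGroup) := Γ.isClosed_topologicalClosure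
  have hgen {g} (hg : g ∈ Γ) : g ∈ Γ.topologicalClosure := Γ.le_topologicalClosure hg
  have htop : Γ.topologicalClosure = ⊤ := HeisGroup.eq_top_of_forall_mk_mem
    (HeisGroup.xHom.apply_ofAdd_mem_of_irrational_div hclosed HeisGroup.continuous_xHom hirr
      (hgen (Subgroup.subset_closure (by simp [HeisGroup.xHom, HeisGroup.mk])))
      (hgen (Subgroup.subset_closure (by simp [HeisGroup.xHom, HeisGroup.mk]))))
    (HeisGroup.yHom.apply_ofAdd_mem_of_irrational_div hclosed HeisGroup.continuous_yHom hirr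
      (hgen (Subgroup.subset_closure (by simp [HeisGroup.yHom, HeisGroup.mk])))
      (hgen (Subgroup.subset_closure (by simp [HeisGroup.yHom, HeisGroup.mk]))))
  rw [dense_iff_closure_eq, ← Subgroup.topologicalClosure_coe, htop, Subgroup.coe_top]
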